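/- Let {x_k} be a normalized complete minimal system, σ^m, σ ⊆ ℕ. Then P_{σ^m} → P_σ pointwise if and only if both σ^m → σ in the product topology on 𝔓(ℕ) and d_s(P_{σ^m}, 0) → d_s(P_σ, 0), where d_s(P, 0) = Σ_j ‖P x_j‖/2^j. -/

import Mathlib

open Filter Topology

noncomputable section

variable {H : Type*} [NormedAddCommGroup H] [InnerProductSpace ℂ H] [CompleteSpace H]

/-- Closed linear span of a set of vectors. -/
def clSpan (s : Set H) : Submodule ℂ H := (Submodule.span ℂ s).topologicalClosure

instance (s : Set H) : CompleteSpace (clSpan s) :=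
  (Submodule.isClosed_topologicalClosure _).completeSpace_coe

/-- Orthogonal projection onto the closed linear span of `s`, as a map `H → H`. -/
def projS (s : Set H) : H →L[ℂ] H :=
  (clSpan s).subtypeL ∘L Submodule.orthogonalProjectionOnto (clSpan s)

/-- The system `x` is complete: its closed linear span is all of `H`. -/
def IsCompleteSystem (x : ℕ → H) : Prop := clSpan (Set.range x) = ⊤

/-- The system `x` is minimal: no vector lies in the closed span of the others. -/
def IsMinimalSystem (x : ℕ → H) : Prop :=
  ∀ k, x k ∉ clSpan (x '' {j | j ≠ k})

/-- `y` is biorthogonal to `x`. -/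
def IsBiorthogonal (x y : ℕ → H) : Prop :=
  ∀ k j, (inner ℂ (x k) (y j) : ℂ) = if k = j then 1 else 0

/-!
If `P_{σᵐ} → P_σ` pointwise, then evaluating at `x k` decides membership of `k` eventually:
by minimality `x k` has an open neighbourhood missing `clSpan (x '' τ)` for every `τ ∌ k`, while
`P_τ x k = x k` for `τ ∋ k`. The weighted sums converge by dominated convergence.

Conversely, coordinatewise convergence makes `P_{σᵐ}` converge to the identity on `clSpan (x '' σ)`
(the operators have norm `≤ 1`), so `⟪P_{σᵐ} x_k, P_σ x_k⟫ = ⟪x_k, P_{σᵐ} P_σ x_k⟫ → ‖P_σ x_k‖²`.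
This gives `liminf ‖P_{σᵐ} x_k‖ ≥ ‖P_σ x_k‖` for every `k`, and convergence of the weighted sums
upgrades it to `‖P_{σᵐ} x_k‖ → ‖P_σ x_k‖`. Norm and inner-product convergence together give
`P_{σᵐ} x_k → P_σ x_k`, and completeness of the system extends this to all of `H`.
-/

section ClosureSpan

variable {ι 𝕜 E F : Type*} [NontriviallyNormedField 𝕜] [NormedAddCommGroup E] [NormedSpace 𝕜 E]
  [NormedAddCommGroup F] [NormedSpace 𝕜 F] {l : Filter ι}

/-- The convergence set of a norm-bounded family of operators is a closed subspace. -/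
theorem tendsto_apply_of_mem_closure_span {T : ι → E →L[𝕜] F} {T₀ : E →L[𝕜] F} {C : ℝ}
    (hT : ∀ i, ‖T i‖ ≤ C) {s : Set E} (hs : ∀ v ∈ s, Tendsto (fun i => T i v) l (𝓝 (T₀ v)))
    {v : E} (hv : v ∈ (Submodule.span 𝕜 s).topologicalClosure) :
    Tendsto (fun i => T i v) l (𝓝 (T₀ v)) := by
  let S : Submodule 𝕜 E :=
    { carrier := {v | Tendsto (fun i => T i v) l (𝓝 (T₀ v))}
      add_mem' := fun ha hb => by simpa only [Set.mem_ofPred_eq, map_add] using ha.add hb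
      zero_mem' := by simpa only [Set.mem_ofPred_eq, map_zero] using tendsto_const_nhds
      smul_mem' := fun c _ hv => by
        simpa only [Set.mem_ofPred_eq, map_smul] using hv.const_smul c }
  have hequi : Equicontinuous fun i => ⇑(T i) :=
    (show (∃ C, ∀ i, ‖T i‖ ≤ C) ↔ _ from (NormedSpace.equicontinuous_TFAE T).out 5 1).1 ⟨C, hT⟩
  have hS : IsClosed (S : Set E) := hequi.isClosed_setOfPred_tendsto T₀.continuous
  exact Submodule.topologicalClosure_minimal _ (Submodule.span_le.2 fun v hv => hs v hv) hS hv

end ClosureSpan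

section InnerProduct

variable {ι 𝕜 E : Type*} [RCLike 𝕜] [NormedAddCommGroup E] [InnerProductSpace 𝕜 E]
  {l : Filter ι} {a : ι → E} {b : E}

theorem tendsto_of_tendsto_norm_of_tendsto_re_inner (hnorm : Tendsto (fun i => ‖a i‖) l (𝓝 ‖b‖))
    (hinner : Tendsto (fun i => RCLike.re (inner 𝕜 (a i) b)) l (𝓝 (‖b‖ ^ 2))) :
    Tendsto a l (𝓝 b) := by
  have hsq : Tendsto (fun i => ‖a i - b‖ ^ 2) l (𝓝 0) := by
    simp only [norm_sub_sq (𝕜 := 𝕜)]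
    convert ((hnorm.pow 2).sub (hinner.const_mul 2)).add_const (‖b‖ ^ 2) using 2
    ring
  rw [tendsto_iff_norm_sub_tendsto_zero]
  simpa only [Real.sqrt_sq (norm_nonneg _), Real.sqrt_zero] using hsq.sqrt

theorem eventually_lt_norm_of_tendsto_re_inner
    (hinner : Tendsto (fun i => RCLike.re (inner 𝕜 (a i) b)) l (𝓝 (‖b‖ ^ 2)))
    {c : ℝ} (hc : c < ‖b‖) : ∀ᶠ i in l, c < ‖a i‖ := by
  rcases lt_or_ge c 0 with hc0 | hc0
  · exact .of_forall fun _ => hc0.trans_le (norm_nonneg _)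
  have hb : 0 < ‖b‖ := hc0.trans_lt hc
  filter_upwards [hinner.eventually (eventually_gt_nhds (by nlinarith : c * ‖b‖ < ‖b‖ ^ 2))]
    with i hi
  exact lt_of_mul_lt_mul_right (hi.trans_le (re_inner_le_norm _ _)) hb.le

end InnerProduct

/-- A Scheffé-type lemma: `∑ |aᵢ - b| = ∑ aᵢ - ∑ b + 2 ∑ (b - aᵢ)⁺`, and the last sum tends to
zero by dominated convergence. -/
theorem tendsto_of_tendsto_tsum_of_le_liminf {ι : Type*} {l : Filter ι} {a : ι → ℕ → ℝ}
    {b g : ℕ → ℝ} (hg : Summable g) (ha : ∀ i j, ‖a i j‖ ≤ g j) (hb : ∀ j, ‖b j‖ ≤ g j)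
    (hlow : ∀ j, ∀ c < b j, ∀ᶠ i in l, c < a i j)
    (hsum : Tendsto (fun i => ∑' j, a i j) l (𝓝 (∑' j, b j))) (k : ℕ) :
    Tendsto (fun i => a i k) l (𝓝 (b k)) := by
  set d : ι → ℕ → ℝ := fun i j => max (b j - a i j) 0
  have hd_le : ∀ i j, ‖d i j‖ ≤ 2 * g j := fun i j => by
    have hai := abs_le.1 (ha i j)
    have hbj := abs_le.1 (hb j)
    rw [Real.norm_of_nonneg (le_max_right _ _)]
    exact max_le (by linarith) (by linarith)
  have hd : Tendsto (fun i => ∑' j, d i j) l (𝓝 0) := by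
    have hdj : ∀ j, Tendsto (fun i => d i j) l (𝓝 0) := fun j =>
      tendsto_order.2 ⟨fun c hc => .of_forall fun i => hc.trans_le (le_max_right _ _),
        fun c hc => (hlow j (b j - c) (by linarith)).mono fun i hi => max_lt (by linarith) hc⟩
    simpa only [tsum_zero] using
      tendsto_tsum_of_dominated_convergence (hg.mul_left 2) hdj (.of_forall hd_le)
  have hsa : ∀ i, Summable (a i) := fun i => hg.of_norm_bounded (ha i)
  have hsb : Summable b := hg.of_norm_bounded hb
  have hsd : ∀ i, Summable (d i) := fun i => (hg.mul_left 2).of_norm_bounded (hd_le i)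
  have habs : ∀ i, |a i k - b k| ≤ ∑' j, a i j - ∑' j, b j + 2 * ∑' j, d i j := fun i => by
    have hpoint : ∀ j, |a i j - b j| = a i j - b j + 2 * d i j := fun j => by
      simp only [d]; rcases le_total (a i j) (b j) with h | h
      · rw [abs_of_nonpos (by linarith), max_eq_left (by linarith)]; ring
      · rw [abs_of_nonneg (by linarith), max_eq_right (by linarith)]; ring
    have hsum_abs : ∑' j, |a i j - b j| = ∑' j, a i j - ∑' j, b j + 2 * ∑' j, d i j := by
      simp only [hpoint]
      rw [((hsa i).sub hsb).tsum_add ((hsd i).mul_left 2), (hsa i).tsum_sub hsb, tsum_mul_left]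
    have hs_abs : Summable fun j => |a i j - b j| := by
      simp only [hpoint]; exact ((hsa i).sub hsb).add ((hsd i).mul_left 2)
    rw [← hsum_abs]
    exact hs_abs.le_tsum k fun j _ => abs_nonneg _
  have hlim : Tendsto (fun i => ∑' j, a i j - ∑' j, b j + 2 * ∑' j, d i j) l (𝓝 0) := by
    simpa only [sub_self, mul_zero, add_zero] using
      (hsum.sub_const (∑' j, b j)).add (hd.const_mul 2)
  rw [tendsto_iff_norm_sub_tendsto_zero]
  exact squeeze_zero (fun i => norm_nonneg _) habs hlim

theorem norm_projS_le (s : Set H) : ‖projS s‖ ≤ 1 :=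
  Submodule.starProjection_norm_le _

theorem projS_apply_mem (s : Set H) (v : H) : projS s v ∈ clSpan s :=
  Submodule.starProjection_apply_mem _ v

theorem projS_apply_of_mem_clSpan {s : Set H} {v : H} (hv : v ∈ clSpan s) : projS s v = v :=
  Submodule.starProjection_eq_self_iff.2 hv

theorem projS_apply_of_mem {s : Set H} {v : H} (hv : v ∈ s) : projS s v = v :=
  projS_apply_of_mem_clSpan (Submodule.le_topologicalClosure _ (Submodule.subset_span hv))

theorem inner_projS_left_eq_right (s : Set H) (u v : H) :
    inner ℂ (projS s u) v = inner ℂ u (projS s v) :=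
  Submodule.inner_starProjection_left_eq_right _ u v

theorem norm_norm_projS_apply_div_pow_le (s : Set H) {v : H} (hv : ‖v‖ = 1) (j : ℕ) :
    ‖‖projS s v‖ / 2 ^ j‖ ≤ (1 / 2) ^ j := by
  have hle : ‖projS s v‖ ≤ 1 := by
    simpa [hv] using (projS s).le_of_opNorm_le (norm_projS_le s) v
  rw [Real.norm_of_nonneg (by positivity), div_pow, one_pow]
  gcongr

section Approximation

variable {ι : Type*} {l : Filter ι} {s : Set H} {s' : ι → Set H}

theorem tendsto_projS_apply_of_mem_clSpan (hs : ∀ v ∈ s, ∀ᶠ i in l, v ∈ s' i) {v : H}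
    (hv : v ∈ clSpan s) : Tendsto (fun i => projS (s' i) v) l (𝓝 v) :=
  tendsto_apply_of_mem_closure_span (T₀ := ContinuousLinearMap.id ℂ H) (fun _ => norm_projS_le _)
    (fun w hw => tendsto_const_nhds.congr' <|
      (hs w hw).mono fun _ hi => (projS_apply_of_mem hi).symm) hv

theorem tendsto_re_inner_projS (hs : ∀ v ∈ s, ∀ᶠ i in l, v ∈ s' i) (v : H) :
    Tendsto (fun i => RCLike.re (inner ℂ (projS (s' i) v) (projS s v))) l
      (𝓝 (‖projS s v‖ ^ 2)) := by
  have hq : inner ℂ v (projS s v) = inner ℂ (projS s v) (projS s v) := by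
    rw [inner_projS_left_eq_right, projS_apply_of_mem_clSpan (projS_apply_mem s v)]
  have h := (tendsto_const_nhds (x := v)).inner (𝕜 := ℂ)
      (tendsto_projS_apply_of_mem_clSpan hs (projS_apply_mem s v))
  simp_rw [← inner_projS_left_eq_right (s' _), hq] at h
  rw [← inner_self_eq_norm_sq (𝕜 := ℂ)]
  exact (RCLike.continuous_re.tendsto _).comp h

end Approximation

theorem tendsto_norm_projS_apply_of_tendsto_tsum {ι : Type*} {l : Filter ι} {x : ℕ → H}
    (hnorm : ∀ k, ‖x k‖ = 1) {σ' : ι → Set ℕ} {σ : Set ℕ}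
    (hσ : ∀ v ∈ x '' σ, ∀ᶠ i in l, v ∈ x '' σ' i)
    (hd : Tendsto (fun i => ∑' j : ℕ, ‖projS (x '' σ' i) (x j)‖ / 2 ^ j) l
      (𝓝 (∑' j : ℕ, ‖projS (x '' σ) (x j)‖ / 2 ^ j))) (k : ℕ) :
    Tendsto (fun i => ‖projS (x '' σ' i) (x k)‖) l (𝓝 ‖projS (x '' σ) (x k)‖) := by
  have hlow : ∀ j, ∀ c < ‖projS (x '' σ) (x j)‖ / 2 ^ j,
      ∀ᶠ i in l, c < ‖projS (x '' σ' i) (x j)‖ / 2 ^ j := fun j c hc =>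
    (eventually_lt_norm_of_tendsto_re_inner (tendsto_re_inner_projS hσ (x j))
      ((lt_div_iff₀ (by positivity)).1 hc)).mono fun _ hi => (lt_div_iff₀ (by positivity)).2 hi
  have hk := tendsto_of_tendsto_tsum_of_le_liminf summable_geometric_two
    (fun _ j => norm_norm_projS_apply_div_pow_le _ (hnorm j) j)
    (fun j => norm_norm_projS_apply_div_pow_le _ (hnorm j) j) hlow hd k
  have h2k : (2 : ℝ) ^ k ≠ 0 := by positivity
  simpa only [div_mul_cancel₀ _ h2k] using hk.mul_const ((2 : ℝ) ^ k)

section Minimal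

variable {x : ℕ → H} {τ : Set ℕ} {k : ℕ}

theorem projS_image_apply_mem_clSpan_of_notMem (hk : k ∉ τ) :
    projS (x '' τ) (x k) ∈ clSpan (x '' {j | j ≠ k}) :=
  Submodule.topologicalClosure_mono
    (Submodule.span_mono (Set.image_mono fun _ hj => ne_of_mem_of_not_mem hj hk))
    (projS_apply_mem _ _)

theorem mem_iff_projS_image_apply_eq (hmin : IsMinimalSystem x) :
    k ∈ τ ↔ projS (x '' τ) (x k) = x k := by
  refine ⟨fun hk => projS_apply_of_mem ⟨k, hk, rfl⟩, fun h => ?_⟩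
  by_contra hk
  exact hmin k (h ▸ projS_image_apply_mem_clSpan_of_notMem hk)

theorem eventually_mem_iff_of_tendsto_projS (hmin : IsMinimalSystem x) {ι : Type*}
    {l : Filter ι} {σ' : ι → Set ℕ} {σ : Set ℕ}
    (hP : Tendsto (fun i => projS (x '' σ' i) (x k)) l (𝓝 (projS (x '' σ) (x k)))) :
    ∀ᶠ i in l, (k ∈ σ' i ↔ k ∈ σ) := by
  by_cases hk : k ∈ σ
  · have hclosed : IsClosed (clSpan (x '' {j | j ≠ k}) : Set H) :=
      Submodule.isClosed_topologicalClosure _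
    rw [(mem_iff_projS_image_apply_eq hmin).1 hk] at hP
    filter_upwards [hP.eventually (hclosed.isOpen_compl.mem_nhds (hmin k))] with i hi
    exact iff_of_true (not_not.1 fun hk' => hi (projS_image_apply_mem_clSpan_of_notMem hk')) hk
  · have hne : projS (x '' σ) (x k) ≠ x k := mt (mem_iff_projS_image_apply_eq hmin).2 hk
    filter_upwards [hP.eventually (eventually_ne_nhds hne)] with i hi
    exact iff_of_false (mt (mem_iff_projS_image_apply_eq hmin).1 hi) hk

end Minimal

theorem forall_eventually_atTop_iff_forall_le {p : ℕ → ℕ → Prop} :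
    (∀ k, ∀ᶠ m in atTop, p m k) ↔ ∀ n : ℕ, ∃ M : ℕ, ∀ m ≥ M, ∀ k ≤ n, p m k := by
  refine ⟨fun h n => ?_, fun h k => ?_⟩
  · obtain ⟨M, hM⟩ := eventually_atTop.1 <|
      (eventually_all_finite (Set.finite_Iic n)).2 fun k _ => h k
    exact ⟨M, fun m hm k hk => hM m hm k hk⟩
  · obtain ⟨M, hM⟩ := h k
    exact eventually_atTop.2 ⟨M, fun m hm => hM m hm k le_rfl⟩

theorem proj_pointwise_convergence_iff_general
    (x : ℕ → H) (hc : IsCompleteSystem x) (hmin : IsMinimalSystem x)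
    (hnorm : ∀ k, ‖x k‖ = 1) (σ' : ℕ → Set ℕ) (σ : Set ℕ) :
    (∀ v : H, Tendsto (fun m => projS (x '' σ' m) v) atTop (𝓝 (projS (x '' σ) v))) ↔
      ((∀ n : ℕ, ∃ M : ℕ, ∀ m ≥ M, ∀ k ≤ n, (k ∈ σ' m ↔ k ∈ σ)) ∧
        Tendsto (fun m => ∑' j : ℕ, ‖projS (x '' σ' m) (x j)‖ / 2 ^ j) atTop
          (𝓝 (∑' j : ℕ, ‖projS (x '' σ) (x j)‖ / 2 ^ j))) := by
  rw [← forall_eventually_atTop_iff_forall_le]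
  constructor
  · intro hP
    refine ⟨fun k => eventually_mem_iff_of_tendsto_projS hmin (hP (x k)), ?_⟩
    exact tendsto_tsum_of_dominated_convergence summable_geometric_two
      (fun j => (hP (x j)).norm.div_const _)
      (.of_forall fun _ j => norm_norm_projS_apply_div_pow_le _ (hnorm j) j)
  · rintro ⟨hσ, hd⟩
    have hs : ∀ v ∈ x '' σ, ∀ᶠ m in atTop, v ∈ x '' σ' m := by
      rintro _ ⟨k, hk, rfl⟩
      exact (hσ k).mono fun m hm => ⟨k, hm.2 hk, rfl⟩
    have hbasis : ∀ v ∈ Set.range x,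
        Tendsto (fun m => projS (x '' σ' m) v) atTop (𝓝 (projS (x '' σ) v)) := by
      rintro _ ⟨k, rfl⟩
      exact tendsto_of_tendsto_norm_of_tendsto_re_inner
        (tendsto_norm_projS_apply_of_tendsto_tsum hnorm hs hd k) (tendsto_re_inner_projS hs _)
    intro v
    have hv : v ∈ clSpan (Set.range x) := hc ▸ Submodule.mem_top
    exact tendsto_apply_of_mem_closure_span (fun _ => norm_projS_le _) hbasis hv

/-- `P_{σᵐ} → P_σ` pointwise iff `σᵐ → σ` in the product topology on `𝔓(ℕ)` and
`d_s(P_{σᵐ}, 0) → d_s(P_σ, 0)`, where `d_s(P, 0) = ∑_j ‖P x_j‖ / 2^j`. -/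
theorem proj_pointwise_convergence_iff [TopologicalSpace.SeparableSpace H]
    (x : ℕ → H) (hc : IsCompleteSystem x) (hmin : IsMinimalSystem x)
    (hnorm : ∀ k, ‖x k‖ = 1) (σ' : ℕ → Set ℕ) (σ : Set ℕ) :
    (∀ v : H, Tendsto (fun m => projS (x '' σ' m) v) atTop (𝓝 (projS (x '' σ) v))) ↔
      ((∀ n : ℕ, ∃ M : ℕ, ∀ m ≥ M, ∀ k ≤ n, (k ∈ σ' m ↔ k ∈ σ)) ∧
        Tendsto (fun m => ∑' j : ℕ, ‖projS (x '' σ' m) (x j)‖ / 2 ^ j) atTop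
          (𝓝 (∑' j : ℕ, ‖projS (x '' σ) (x j)‖ / 2 ^ j))) :=
  proj_pointwise_convergence_iff_general x hc hmin hnorm σ' σ
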